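/- With the setup of the path-based optimality conditions: suppose for each k ∈ [K] (paths with x_k > 0 in a component C), ∑_{j ∈ P_k} 1/(∑_{i: j ∈ P_i} x_i) - λ D_k = μ holds with μ > 0, λ ≥ 0, and 0 ≤ D_k ≤ D_max. Then, letting H = ∑_k x_k and |C| the number of nodes covered by the paths, |C|/(μ + λ D_max) ≤ H ≤ |C|/μ. -/

import Mathlib

/-!
Multiplying the stationarity equation of path `k` by `x k` and summing over `k` gives
`μ H + λ ∑ₖ xₖ Dₖ = ∑ₖ ∑_{j ∈ Pₖ} xₖ / Sⱼ`, where `Sⱼ` is the total flow through node `j`.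
Exchanging the order of summation, node `j` contributes `Sⱼ / Sⱼ = 1`, so the right side is `|C|`.
Since `0 ≤ ∑ₖ xₖ Dₖ ≤ Dmax H`, both bounds on `H` follow.
-/

open Finset

section

variable {ι C : Type*} [Fintype ι] [DecidableEq C]

def nodeFlow (P : ι → Finset C) (x : ι → ℝ) (j : C) : ℝ :=
  ∑ i ∈ univ.filter (fun i => j ∈ P i), x i

variable {P : ι → Finset C} {x : ι → ℝ}

theorem nodeFlow_pos (hx : ∀ i, 0 < x i) {j : C} (hj : ∃ i, j ∈ P i) : 0 < nodeFlow P x j := by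
  obtain ⟨i, hi⟩ := hj
  exact sum_pos (fun i _ => hx i) ⟨i, mem_filter.2 ⟨mem_univ i, hi⟩⟩

variable [Fintype C]

theorem sum_sum_div_nodeFlow (hS : ∀ j, nodeFlow P x j ≠ 0) :
    ∑ k, ∑ j ∈ P k, x k / nodeFlow P x j = Fintype.card C := by
  have hswap : ∑ k, ∑ j ∈ P k, x k / nodeFlow P x j
      = ∑ j, ∑ k ∈ univ.filter (fun k => j ∈ P k), x k / nodeFlow P x j :=
    sum_comm' fun k j => by simp
  have hnode (j : C) : ∑ k ∈ univ.filter (fun k => j ∈ P k), x k / nodeFlow P x j = 1 := by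
    rw [← sum_div]
    exact div_self (hS j)
  simp [hswap, hnode]

theorem mul_sum_add_mul_sum_eq_card {lam μ : ℝ} {D : ι → ℝ} (hS : ∀ j, nodeFlow P x j ≠ 0)
    (hstat : ∀ k, ∑ j ∈ P k, 1 / nodeFlow P x j - lam * D k = μ) :
    μ * ∑ k, x k + lam * ∑ k, x k * D k = Fintype.card C := by
  calc μ * ∑ k, x k + lam * ∑ k, x k * D k
      = ∑ k, x k * (μ + lam * D k) := by
        rw [mul_sum, mul_sum, ← sum_add_distrib]
        exact sum_congr rfl fun k _ => by ring
    _ = ∑ k, ∑ j ∈ P k, x k / nodeFlow P x j := by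
        refine sum_congr rfl fun k _ => ?_
        rw [← hstat k, sub_add_cancel, mul_sum]
        simp only [mul_one_div]
    _ = Fintype.card C := sum_sum_div_nodeFlow hS

end

theorem component_mass_bounds
    {C : Type*} [Fintype C] [DecidableEq C]
    (K : ℕ) (hK : 0 < K) (P : Fin K → Finset C) (x : Fin K → ℝ)
    (hx : ∀ k, 0 < x k)
    (hcover : ∀ j : C, ∃ k, j ∈ P k)
    (lam μ Dmax : ℝ) (hlam : 0 ≤ lam) (hμ : 0 < μ)
    (D : Fin K → ℝ) (hD : ∀ k, 0 ≤ D k ∧ D k ≤ Dmax)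
    (hstat : ∀ k,
      (∑ j ∈ P k, 1 / (∑ i ∈ Finset.univ.filter (fun i => j ∈ P i), x i))
        - lam * D k = μ) :
    (Fintype.card C : ℝ) / (μ + lam * Dmax) ≤ ∑ k, x k ∧
    ∑ k, x k ≤ (Fintype.card C : ℝ) / μ := by
  have hmass := mul_sum_add_mul_sum_eq_card (fun j => (nodeFlow_pos hx (hcover j)).ne') hstat
  have hcost : 0 ≤ ∑ k, x k * D k := sum_nonneg fun k _ => mul_nonneg (hx k).le (hD k).1
  have hcost_le : ∑ k, x k * D k ≤ Dmax * ∑ k, x k := by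
    rw [mul_sum]
    exact sum_le_sum fun k _ => by nlinarith [hx k, hD k]
  have hDmax : 0 ≤ Dmax := (hD ⟨0, hK⟩).1.trans (hD ⟨0, hK⟩).2
  constructor
  · rw [div_le_iff₀ (by positivity)]
    nlinarith [mul_le_mul_of_nonneg_left hcost_le hlam]
  · rw [le_div_iff₀ hμ]
    nlinarith [mul_nonneg hlam hcost]
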